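/- For a single-input system whose graph is an input-rooted out-branching, the maximum cardinality of a herdable set of states equals Σ_{d=1}^{d_max} max(|N_d|, |P_d|). -/

import Mathlib

open Matrix
open scoped Classical

/-- A walk of length `d+1` in the system graph from input node `u j` to state node `x i`:
it consists of the edge `u j → x (p 0)` (present iff `B (p 0) j ≠ 0`) followed by the `d`
state edges `x (p t) → x (p (t+1))` (present iff the corresponding entry of `A` is nonzero),
ending at `p (last) = i`. -/
def IsWalk {n m : ℕ} (A : Matrix (Fin n) (Fin n) ℝ) (B : Matrix (Fin n) (Fin m) ℝ)
    (j : Fin m) (i : Fin n) (d : ℕ) (p : Fin (d + 1) → Fin n) : Prop :=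
  B (p 0) j ≠ 0 ∧ (∀ t : Fin d, A (p t.succ) (p t.castSucc) ≠ 0) ∧ p (Fin.last d) = i

/-- The weight of a walk: the product of the weights of its edges. -/
def walkWeight {n m : ℕ} (A : Matrix (Fin n) (Fin n) ℝ) (B : Matrix (Fin n) (Fin m) ℝ)
    (j : Fin m) {d : ℕ} (p : Fin (d + 1) → Fin n) : ℝ :=
  B (p 0) j * ∏ t : Fin d, A (p t.succ) (p t.castSucc)

def ctrbMat {n m : ℕ} (A : Matrix (Fin n) (Fin n) ℝ) (B : Matrix (Fin n) (Fin m) ℝ) :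
    Matrix (Fin n) (Fin n × Fin m) ℝ :=
  Matrix.of fun i dj => (A ^ (dj.1 : ℕ) * B) i dj.2

/-- A set of states is herdable iff some vector in the range of the controllability matrix
is strictly positive on that set. -/
def RangeHerdable {n m : ℕ} (A : Matrix (Fin n) (Fin n) ℝ) (B : Matrix (Fin n) (Fin m) ℝ)
    (X : Set (Fin n)) : Prop :=
  ∃ α : Fin n × Fin m → ℝ, ∀ i ∈ X, 0 < (ctrbMat A B).mulVec α i

/-- States with a positive walk of length `d+1` from the single input, as a finset. -/
noncomputable def PosFin {n : ℕ} (A : Matrix (Fin n) (Fin n) ℝ) (B : Matrix (Fin n) (Fin 1) ℝ)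
    (d : ℕ) : Finset (Fin n) :=
  Finset.univ.filter fun i =>
    ∃ p : Fin (d + 1) → Fin n, IsWalk A B 0 i d p ∧ 0 < walkWeight A B 0 p

/-- States with a negative walk of length `d+1` from the single input, as a finset. -/
noncomputable def NegFin {n : ℕ} (A : Matrix (Fin n) (Fin n) ℝ) (B : Matrix (Fin n) (Fin 1) ℝ)
    (d : ℕ) : Finset (Fin n) :=
  Finset.univ.filter fun i =>
    ∃ p : Fin (d + 1) → Fin n, IsWalk A B 0 i d p ∧ walkWeight A B 0 p < 0
section AuxBranch

variable {n : ℕ} (A : Matrix (Fin n) (Fin n) ℝ) (B : Matrix (Fin n) (Fin 1) ℝ)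

lemma walkWeight_ne_zero' {i : Fin n} {d : ℕ} {p : Fin (d+1) → Fin n}
    (hp : IsWalk A B 0 i d p) : walkWeight A B 0 p ≠ 0 :=
  mul_ne_zero hp.1 (Finset.prod_ne_zero_iff.mpr fun t _ => hp.2.1 t)

lemma isWalk_trunc' {i : Fin n} {d : ℕ} {p : Fin (d+2) → Fin n}
    (hp : IsWalk A B 0 i (d+1) p) :
    IsWalk A B 0 (p (Fin.castSucc (Fin.last d))) d (p ∘ Fin.castSucc) := by
  refine ⟨?_, ?_, rfl⟩
  · simpa using hp.1
  · intro t
    have := hp.2.1 t.castSucc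
    rw [Fin.succ_castSucc] at this; exact this

lemma walkWeight_trunc' {i : Fin n} {d : ℕ} {p : Fin (d+2) → Fin n}
    (hp : IsWalk A B 0 i (d+1) p) :
    walkWeight A B 0 p
      = A i (p (Fin.castSucc (Fin.last d))) * walkWeight A B 0 (p ∘ Fin.castSucc) := by
  unfold walkWeight
  rw [Fin.prod_univ_castSucc]
  simp only [Function.comp, Fin.succ_castSucc, Fin.castSucc_zero, Fin.succ_last, hp.2.2]
  ring

lemma isWalk_snoc' {k i : Fin n} {d : ℕ} {q : Fin (d+1) → Fin n}
    (hq : IsWalk A B 0 k d q) (hA : A i k ≠ 0) :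
    IsWalk A B 0 i (d+1) (Fin.snoc q i) := by
  refine ⟨?_, ?_, by simp⟩
  · have h0 : (0 : Fin (d+2)) = Fin.castSucc 0 := rfl
    rw [h0, Fin.snoc_castSucc]; exact hq.1
  · intro t
    refine Fin.lastCases ?_ ?_ t
    · rw [Fin.succ_last, Fin.snoc_last, Fin.snoc_castSucc, hq.2.2]
      exact hA
    · intro s
      rw [Fin.succ_castSucc, Fin.snoc_castSucc, Fin.snoc_castSucc]
      exact hq.2.1 s

lemma walkWeight_snoc' {k i : Fin n} {d : ℕ} {q : Fin (d+1) → Fin n}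
    (hq : IsWalk A B 0 k d q) :
    walkWeight A B 0 (Fin.snoc q i : Fin (d+2) → Fin n) = A i k * walkWeight A B 0 q := by
  unfold walkWeight
  rw [Fin.prod_univ_castSucc]
  have h0 : (0 : Fin (d+2)) = Fin.castSucc 0 := rfl
  rw [h0, Fin.snoc_castSucc]
  simp only [Fin.succ_castSucc, Fin.snoc_castSucc, Fin.succ_last, Fin.snoc_last, hq.2.2]
  ring

lemma exists_walk_of_ne_zero' :
    ∀ (d : ℕ) (i : Fin n), ((A ^ d * B) i 0 ≠ 0) →
      ∃ p : Fin (d+1) → Fin n, IsWalk A B 0 i d p := by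
  intro d
  induction d with
  | zero =>
    intro i h
    rw [pow_zero, Matrix.one_mul] at h
    exact ⟨fun _ => i, h, fun t => t.elim0, rfl⟩
  | succ d ih =>
    intro i h
    rw [pow_succ', Matrix.mul_assoc, Matrix.mul_apply] at h
    obtain ⟨k, _, hk⟩ := Finset.exists_ne_zero_of_sum_ne_zero h
    obtain ⟨q, hq⟩ := ih k (right_ne_zero_of_mul hk)
    exact ⟨Fin.snoc q i, isWalk_snoc' A B hq (left_ne_zero_of_mul hk)⟩

lemma entry_eq_walkWeight'
    (hbranch : ∀ i : Fin n,
      ∃! w : Σ d : ℕ, Fin (d + 1) → Fin n, IsWalk A B 0 i w.1 w.2) :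
    ∀ (d : ℕ) (i : Fin n) (p : Fin (d+1) → Fin n), IsWalk A B 0 i d p →
      (A ^ d * B) i 0 = walkWeight A B 0 p := by
  intro d
  induction d with
  | zero =>
    intro i p hp
    have h0 : p 0 = i := hp.2.2
    rw [pow_zero, Matrix.one_mul]
    simp [walkWeight, h0]
  | succ d ih =>
    intro i p hp
    have htr := isWalk_trunc' A B hp
    rw [pow_succ', Matrix.mul_assoc, Matrix.mul_apply]
    rw [Finset.sum_eq_single (p (Fin.castSucc (Fin.last d)))]
    · rw [ih _ _ htr, walkWeight_trunc' A B hp]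
    · intro k _ hne
      by_contra hkne
      obtain ⟨q, hq⟩ := exists_walk_of_ne_zero' A B d k (right_ne_zero_of_mul hkne)
      have hsnoc := isWalk_snoc' A B hq (left_ne_zero_of_mul hkne)
      obtain ⟨w, _, hu⟩ := hbranch i
      have heq : (⟨d+1, Fin.snoc q i⟩ : Σ d : ℕ, Fin (d+1) → Fin n) = ⟨d+1, p⟩ :=
        (hu ⟨d+1, Fin.snoc q i⟩ hsnoc).trans (hu ⟨d+1, p⟩ hp).symm
      have hfun : (Fin.snoc q i : Fin (d+2) → Fin n) = p :=
        eq_of_heq (Sigma.mk.inj_iff.mp heq).2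
      apply hne
      rw [← hfun, Fin.snoc_castSucc, hq.2.2]
    · intro h; exact absurd (Finset.mem_univ _) h

end AuxBranch

/-- for a single-input system whose graph is an input-rooted out-branching,
the maximum cardinality of a herdable set of states is `Σ_d max(|N_d|, |P_d|)` (summing
over all possible walk lengths). -/
theorem max_card_herdable_of_out_branching
    {n : ℕ} (A : Matrix (Fin n) (Fin n) ℝ) (B : Matrix (Fin n) (Fin 1) ℝ)
    (hbranch : ∀ i : Fin n,
      ∃! w : Σ d : ℕ, Fin (d + 1) → Fin n, IsWalk A B 0 i w.1 w.2) :
    IsGreatest {c : ℕ | ∃ X : Finset (Fin n), RangeHerdable A B ↑X ∧ X.card = c}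
      (∑ d ∈ Finset.range n, max (NegFin A B d).card (PosFin A B d).card) := by
  classical
  choose W hW using hbranch
  -- hW i : IsWalk ... ∧ ∀ y, IsWalk ... → y = W i
  -- entry formula
  have hentry : ∀ (d : ℕ) (i : Fin n),
      (A ^ d * B) i 0 = if (W i).1 = d then walkWeight A B 0 (W i).2 else 0 := by
    intro d i
    by_cases h : (W i).1 = d
    · rw [if_pos h]
      have := entry_eq_walkWeight' A B (fun i => ⟨W i, (hW i).1, (hW i).2⟩)
        (W i).1 i (W i).2 (hW i).1
      rw [← h]; exact this
    · rw [if_neg h]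
      by_contra hne
      obtain ⟨p, hp⟩ := exists_walk_of_ne_zero' A B d i hne
      exact h (congrArg Sigma.fst ((hW i).2 ⟨d, p⟩ hp)).symm
  -- mulVec formula
  have hmv : ∀ (α : Fin n × Fin 1 → ℝ) (i : Fin n),
      (ctrbMat A B).mulVec α i =
        if h : (W i).1 < n then walkWeight A B 0 (W i).2 * α (⟨(W i).1, h⟩, 0) else 0 := by
    intro α i
    have h1 : (ctrbMat A B).mulVec α i = ∑ d : Fin n, (A ^ (d : ℕ) * B) i 0 * α (d, 0) := by
      simp [Matrix.mulVec, dotProduct, ctrbMat, Fintype.sum_prod_type, Fin.sum_univ_one,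
        Fin.fin_one_eq_zero]
    rw [h1]
    simp_rw [hentry]
    by_cases h : (W i).1 < n
    · rw [dif_pos h, Finset.sum_eq_single (⟨(W i).1, h⟩ : Fin n)]
      · rw [if_pos rfl]
      · intro d _ hd
        rw [if_neg, zero_mul]
        intro hc; exact hd (Fin.ext hc.symm)
      · intro h'; exact absurd (Finset.mem_univ _) h'
    · rw [dif_neg h]
      refine Finset.sum_eq_zero fun d _ => ?_
      rw [if_neg, zero_mul]
      intro hc; exact h (hc ▸ d.isLt)
  -- membership characterizations
  have hmemP : ∀ (d : ℕ) (i : Fin n),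
      i ∈ PosFin A B d ↔ ((W i).1 = d ∧ 0 < walkWeight A B 0 (W i).2) := by
    intro d i
    simp only [PosFin, Finset.mem_filter, Finset.mem_univ, true_and]
    constructor
    · rintro ⟨p, hp, hpos⟩
      have he := (hW i).2 ⟨d, p⟩ hp
      refine ⟨(congrArg Sigma.fst he).symm ▸ rfl, ?_⟩
      · rw [← he]; exact hpos
    · rintro ⟨hd, hpos⟩
      subst hd
      exact ⟨(W i).2, (hW i).1, hpos⟩
  have hmemN : ∀ (d : ℕ) (i : Fin n),
      i ∈ NegFin A B d ↔ ((W i).1 = d ∧ walkWeight A B 0 (W i).2 < 0) := by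
    intro d i
    simp only [NegFin, Finset.mem_filter, Finset.mem_univ, true_and]
    constructor
    · rintro ⟨p, hp, hneg⟩
      have he := (hW i).2 ⟨d, p⟩ hp
      refine ⟨(congrArg Sigma.fst he).symm ▸ rfl, ?_⟩
      · rw [← he]; exact hneg
    · rintro ⟨hd, hneg⟩
      subst hd
      exact ⟨(W i).2, (hW i).1, hneg⟩
  set f : ℕ → Finset (Fin n) := fun d =>
    if (NegFin A B d).card ≤ (PosFin A B d).card then PosFin A B d else NegFin A B d with hf
  have hfcard : ∀ d, (f d).card = max (NegFin A B d).card (PosFin A B d).card := by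
    intro d
    by_cases h : (NegFin A B d).card ≤ (PosFin A B d).card
    · rw [hf]; simp only [if_pos h]; exact (max_eq_right h).symm
    · rw [hf]; simp only [if_neg h]; exact (max_eq_left (le_of_not_ge h)).symm
  have hfmem : ∀ d i, i ∈ f d → (W i).1 = d := by
    intro d i hi
    simp only [hf] at hi
    by_cases h : (NegFin A B d).card ≤ (PosFin A B d).card
    · simp only [if_pos h] at hi; exact ((hmemP d i).mp hi).1
    · simp only [if_neg h] at hi; exact ((hmemN d i).mp hi).1
  constructor
  · -- membership: the max is attained
    refine ⟨(Finset.range n).biUnion f, ?_, ?_⟩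
    · refine ⟨fun dj => if (NegFin A B (dj.1 : ℕ)).card ≤ (PosFin A B (dj.1 : ℕ)).card
        then (1 : ℝ) else -1, ?_⟩
      intro i hi
      rw [Finset.mem_coe, Finset.mem_biUnion] at hi
      obtain ⟨d, hd, hi⟩ := hi
      have hdn : d < n := Finset.mem_range.mp hd
      have hWd : (W i).1 = d := hfmem d i hi
      have hlt : (W i).1 < n := hWd ▸ hdn
      rw [hmv, dif_pos hlt]
      by_cases h : (NegFin A B d).card ≤ (PosFin A B d).card
      · have hpos : 0 < walkWeight A B 0 (W i).2 := by
          simp only [hf, if_pos h] at hi; exact ((hmemP d i).mp hi).2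
        have : (if (NegFin A B ((⟨(W i).1, hlt⟩ : Fin n) : ℕ)).card
            ≤ (PosFin A B ((⟨(W i).1, hlt⟩ : Fin n) : ℕ)).card then (1:ℝ) else -1) = 1 := by
          simp only [hWd]; rw [if_pos h]
        rw [this]; linarith
      · have hneg : walkWeight A B 0 (W i).2 < 0 := by
          simp only [hf, if_neg h] at hi; exact ((hmemN d i).mp hi).2
        have : (if (NegFin A B ((⟨(W i).1, hlt⟩ : Fin n) : ℕ)).card
            ≤ (PosFin A B ((⟨(W i).1, hlt⟩ : Fin n) : ℕ)).card then (1:ℝ) else -1) = -1 := by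
          simp only [hWd]; rw [if_neg h]
        rw [this]; linarith
    · rw [Finset.card_biUnion]
      · exact Finset.sum_congr rfl fun d _ => hfcard d
      · intro d _ d' _ hne
        rw [Function.onFun, Finset.disjoint_left]
        intro i hi hi'
        exact hne ((hfmem d i hi).symm.trans (hfmem d' i hi'))
  · -- upper bound
    rintro c ⟨X, ⟨α, hα⟩, rfl⟩
    have hsub : X ⊆ (Finset.range n).biUnion fun d => X.filter fun i => (W i).1 = d := by
      intro i hi
      have hpos := hα i (Finset.mem_coe.mpr hi)
      rw [hmv] at hpos
      by_cases h : (W i).1 < n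
      · rw [Finset.mem_biUnion]
        exact ⟨(W i).1, Finset.mem_range.mpr h, Finset.mem_filter.mpr ⟨hi, rfl⟩⟩
      · rw [dif_neg h] at hpos; exact absurd hpos (lt_irrefl 0)
    calc X.card ≤ ((Finset.range n).biUnion fun d => X.filter fun i => (W i).1 = d).card :=
          Finset.card_le_card hsub
      _ ≤ ∑ d ∈ Finset.range n, (X.filter fun i => (W i).1 = d).card :=
          Finset.card_biUnion_le
      _ ≤ ∑ d ∈ Finset.range n, max (NegFin A B d).card (PosFin A B d).card := by
          refine Finset.sum_le_sum fun d hd => ?_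
          have hdn : d < n := Finset.mem_range.mp hd
          by_cases h : 0 < α (⟨d, hdn⟩, 0)
          · refine le_trans (Finset.card_le_card ?_) (le_max_right _ _)
            intro i hi
            obtain ⟨hiX, hWd⟩ := Finset.mem_filter.mp hi
            have hpos := hα i (Finset.mem_coe.mpr hiX)
            rw [hmv, dif_pos (show (W i).1 < n from hWd ▸ hdn)] at hpos
            have hfin : (⟨(W i).1, hWd ▸ hdn⟩ : Fin n) = ⟨d, hdn⟩ := Fin.ext hWd
            rw [hfin] at hpos
            exact (hmemP d i).mpr ⟨hWd, by nlinarith⟩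
          · refine le_trans (Finset.card_le_card ?_) (le_max_left _ _)
            intro i hi
            obtain ⟨hiX, hWd⟩ := Finset.mem_filter.mp hi
            have hpos := hα i (Finset.mem_coe.mpr hiX)
            rw [hmv, dif_pos (show (W i).1 < n from hWd ▸ hdn)] at hpos
            have hfin : (⟨(W i).1, hWd ▸ hdn⟩ : Fin n) = ⟨d, hdn⟩ := Fin.ext hWd
            rw [hfin] at hpos
            push_neg at h
            exact (hmemN d i).mpr ⟨hWd, by nlinarith⟩
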